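/- arXiv:0706.1581 — 4 statements merged into one kernel-verified Lean document; each statement's English description precedes it below -/
import Mathlib

section
/- Let X be a CAT(0) space with a block structure: a cover by closed convex subspaces, each block intersecting at least two others, each block assigned a parity (+) or (−) such that two blocks intersect only if they have opposite parity. Then the nerve of the collection of blocks contains no cycles of odd length; combined with the structural assumptions it is a tree (in particular, a bipartite graph). -/
/-- A block structure on a metric space `X`: a cover by closed, (metrically) convex
subspaces, each block meeting at least two others, with a parity such that two blocks
intersect only if they have opposite parity, and an `ε > 0` such that two blocks
intersect iff their `ε`-neighborhoods intersect. -/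
structure BlockStructure (X : Type*) [MetricSpace X] (ι : Type*) where
  B : ι → Set X
  closed : ∀ i, IsClosed (B i)
  convex : ∀ i, ∀ x ∈ B i, ∀ y ∈ B i, ∀ z : X, dist x z + dist z y = dist x y → z ∈ B i
  cover : ∀ x : X, ∃ i, x ∈ B i
  meetsTwo : ∀ i, ∃ j k, j ≠ i ∧ k ≠ i ∧ j ≠ k ∧
    (B i ∩ B j).Nonempty ∧ (B i ∩ B k).Nonempty
  parity : ι → Bool
  parityCond : ∀ i j, i ≠ j → (B i ∩ B j).Nonempty → parity i ≠ parity j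
  eps : ℝ
  epsPos : 0 < eps
  epsCond : ∀ i j, (B i ∩ B j).Nonempty ↔
    (Metric.thickening eps (B i) ∩ Metric.thickening eps (B j)).Nonempty

/-- The nerve (1-skeleton) of the collection of blocks: two distinct blocks are
adjacent when they intersect. -/
def nerveGraph {X : Type*} [MetricSpace X] {ι : Type*} (bs : BlockStructure X ι) :
    SimpleGraph ι where
  Adj i j := i ≠ j ∧ (bs.B i ∩ bs.B j).Nonempty
  symm := by
    constructor
    intro i j h
    exact ⟨h.1.symm, by rw [Set.inter_comm]; exact h.2⟩
  loopless := by constructor; intro i h; exact h.1 rfl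

def BlockStructure.parityColoring {X : Type*} [MetricSpace X] {ι : Type*}
    (bs : BlockStructure X ι) : (nerveGraph bs).Coloring Bool :=
  SimpleGraph.Coloring.mk bs.parity fun hadj => bs.parityCond _ _ hadj.1 hadj.2

/-- The nerve of a block structure contains no cycles of odd length (it is bipartite
via the parity condition): every closed walk has even length. -/
theorem stmt7 {X : Type*} [MetricSpace X] {ι : Type*} (bs : BlockStructure X ι) :
    ∀ (i : ι) (w : (nerveGraph bs).Walk i i), Even w.length :=
  fun _ w => (bs.parityColoring.even_length_iff_congr w).mpr Iff.rfl
end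

section
/- Let (α_n) be a sequence of geodesic rays with common basepoint in a CAT(0) space with block structure, converging uniformly on compacts to a geodesic ray α with infinite itinerary [B_1, B_2, …]. Then for every block B in the itinerary of α, B belongs to the itinerary of α_n for all sufficiently large n. -/
/-- A geodesic ray: unit-speed geodesic on `[0, ∞)`. -/
def IsGeodesicRay {X : Type*} [MetricSpace X] (α : ℝ → X) : Prop :=
  ∀ s t : ℝ, 0 ≤ s → 0 ≤ t → dist (α s) (α t) = |s - t|

/-- The ray `α` *enters* the block `B i` at time `t`: it passes through a point of
`B i` lying in no other block. -/
def Enters {X ι : Type*} [MetricSpace X] (B : ι → Set X) (α : ℝ → X) (t : ℝ) (i : ι) :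
    Prop :=
  α t ∈ B i ∧ ∀ j, j ≠ i → α t ∉ B j

/-!
A point `α t` entering the block `B i` lies in no other block. By the `ε`-condition, the blocks
whose `ε`-thickening contains it pairwise meet, so by the parity condition at most one of them
differs from `B i`; being closed and missing `α t`, that block misses a whole neighbourhood of
`α t`. Hence every point near `α t` lies in `B i` alone, and `α_n t → α t`.
-/

open Filter Metric Topology

namespace BlockStructure

variable {X ι : Type*} [MetricSpace X] (bs : BlockStructure X ι)

lemma inter_nonempty_of_mem_thickening {i j : ι} {x : X} (hi : x ∈ thickening bs.eps (bs.B i))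
    (hj : x ∈ thickening bs.eps (bs.B j)) : (bs.B i ∩ bs.B j).Nonempty :=
  (bs.epsCond i j).2 ⟨x, hi, hj⟩

lemma eq_of_inter_nonempty {i j k : ι} (hij : i ≠ j) (hik : i ≠ k)
    (hmij : (bs.B i ∩ bs.B j).Nonempty) (hmik : (bs.B i ∩ bs.B k).Nonempty)
    (hmjk : (bs.B j ∩ bs.B k).Nonempty) : j = k := by
  by_contra hjk
  -- otherwise the parities of `i`, `j`, `k` would be three distinct booleans
  have hpij := bs.parityCond i j hij hmij
  have hpik := bs.parityCond i k hik hmik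
  have hpjk := bs.parityCond j k hjk hmjk
  revert hpij hpik hpjk
  cases bs.parity i <;> cases bs.parity j <;> cases bs.parity k <;> decide

lemma subsingleton_thickening_neighbours {i : ι} {x : X} (hx : x ∈ bs.B i) :
    {j | j ≠ i ∧ x ∈ thickening bs.eps (bs.B j)}.Subsingleton := by
  rintro j ⟨hji, hj⟩ k ⟨hki, hk⟩
  have hi : x ∈ thickening bs.eps (bs.B i) := self_subset_thickening bs.epsPos _ hx
  exact bs.eq_of_inter_nonempty hji.symm hki.symm (bs.inter_nonempty_of_mem_thickening hi hj)
    (bs.inter_nonempty_of_mem_thickening hi hk) (bs.inter_nonempty_of_mem_thickening hj hk)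

lemma eventually_forall_ne_notMem {i : ι} {x : X} (hx : x ∈ bs.B i)
    (hx' : ∀ j, j ≠ i → x ∉ bs.B j) : ∀ᶠ y in 𝓝 x, ∀ j, j ≠ i → y ∉ bs.B j := by
  set S := {j | j ≠ i ∧ x ∈ thickening bs.eps (bs.B j)}
  have hfar : ∀ᶠ y in 𝓝 x, ∀ j ∈ S, y ∉ bs.B j :=
    (eventually_all_finite (bs.subsingleton_thickening_neighbours hx).finite).2 fun j hj =>
      (bs.closed j).isOpen_compl.mem_nhds (hx' j hj.1)
  filter_upwards [hfar, ball_mem_nhds x bs.epsPos] with y hyS hyx j hji hyj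
  refine hyS j ⟨hji, mem_thickening_iff.2 ⟨y, hyj, ?_⟩⟩ hyj
  rwa [mem_ball'] at hyx

lemma enters_of_forall_ne_notMem {α : ℝ → X} {t : ℝ} {i : ι}
    (h : ∀ j, j ≠ i → α t ∉ bs.B j) : Enters bs.B α t i := by
  refine ⟨?_, h⟩
  obtain ⟨k, hk⟩ := bs.cover (α t)
  by_cases hki : k = i
  · exact hki ▸ hk
  · exact absurd hk (h k hki)

end BlockStructure

lemma tendsto_apply_of_uniformly_on_Icc {X : Type*} [MetricSpace X] {f : ℕ → ℝ → X}
    {g : ℝ → X} (hconv : ∀ T > (0 : ℝ), ∀ ε > (0 : ℝ), ∃ N : ℕ, ∀ n ≥ N,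
      ∀ t ∈ Set.Icc (0 : ℝ) T, dist (f n t) (g t) < ε) {t : ℝ} (ht : 0 ≤ t) :
    Tendsto (fun n => f n t) atTop (𝓝 (g t)) := by
  refine Metric.tendsto_atTop.2 fun ε hε => ?_
  obtain ⟨N, hN⟩ := hconv (t + 1) (by linarith) ε hε
  exact ⟨N, fun n hn => hN n hn t ⟨ht, by linarith⟩⟩

theorem stmt11_general {X ι : Type*} [MetricSpace X] (bs : BlockStructure X ι)
    (α : ℝ → X)
    (αseq : ℕ → ℝ → X)
    (hconv : ∀ T > (0 : ℝ), ∀ ε > (0 : ℝ), ∃ N : ℕ, ∀ n ≥ N,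
      ∀ t ∈ Set.Icc (0 : ℝ) T, dist (αseq n t) (α t) < ε) :
    ∀ i : ι, (∃ t : ℝ, 0 ≤ t ∧ Enters bs.B α t i) →
      ∃ N : ℕ, ∀ n ≥ N, ∃ t : ℝ, 0 ≤ t ∧ Enters bs.B (αseq n) t i := by
  rintro i ⟨t, ht, hmem, honly⟩
  have hnear := (tendsto_apply_of_uniformly_on_Icc hconv ht).eventually
    (bs.eventually_forall_ne_notMem hmem honly)
  obtain ⟨N, hN⟩ := eventually_atTop.1 hnear
  exact ⟨N, fun n hn => ⟨t, ht, bs.enters_of_forall_ne_notMem (hN n hn)⟩⟩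

/-- Let `(α_n)` be geodesic rays with common basepoint converging (uniformly on
compact sets) to a geodesic ray `α` with infinite itinerary.  Then every block in the
itinerary of `α` belongs to the itinerary of `α_n` for all sufficiently large `n`. -/
theorem stmt11 {X ι : Type*} [MetricSpace X] (bs : BlockStructure X ι)
    (α : ℝ → X) (hα : IsGeodesicRay α)
    (αseq : ℕ → ℝ → X) (hαseq : ∀ n, IsGeodesicRay (αseq n))
    (hbase : ∀ n, αseq n 0 = α 0)
    (hconv : ∀ T > (0 : ℝ), ∀ ε > (0 : ℝ), ∃ N : ℕ, ∀ n ≥ N,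
      ∀ t ∈ Set.Icc (0 : ℝ) T, dist (αseq n t) (α t) < ε)
    (hirr : {i : ι | ∃ t : ℝ, 0 ≤ t ∧ Enters bs.B α t i}.Infinite) :
    ∀ i : ι, (∃ t : ℝ, 0 ≤ t ∧ Enters bs.B α t i) →
      ∃ N : ℕ, ∀ n ≥ N, ∃ t : ℝ, 0 ≤ t ∧ Enters bs.B (αseq n) t i :=
  stmt11_general bs α αseq hconv
end

section
/- In a CAT(0) product Y = T × ℝ with T the 4-valent tree (a joint block), if γ and γ' are two vertical lines and γ_0 is any joint line lying between them (i.e., every geodesic from γ to γ' meets γ_0), then γ_0 is parallel to both γ and γ': the convex hull of γ_0 ∪ γ is a flat strip. -/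
/-!
The vertical segments `s ↦ f s u` of the flat strip spanned by `γ` and `γ'` are geodesics from
`γ` to `γ'`, so `γ₀` meets each of them, say at height `u s` and time `τ s`. Since `γ₀` is a
geodesic, `(τ a - τ b)² = (a - b)² + (u a - u b)²`: the points `(s, u s)` of the Euclidean plane
are isometric to points of a line, hence collinear, so `u` is affine; being bounded it is
constant. Thus `γ₀` is a horizontal line of the strip, and the sub-strips below and above it are
the required flat strips.
-/

/-- A unit-speed geodesic line `ℝ → X`. -/
def IsGeodesicLine {X : Type*} [MetricSpace X] (γ : ℝ → X) : Prop :=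
  ∀ s t : ℝ, dist (γ s) (γ t) = |s - t|

/-- Two geodesic lines are *parallel* when their convex hull is a flat strip:
there is an isometrically embedded Euclidean strip `ℝ × [0, d]` whose two boundary
lines are the two given lines (up to orientation and translation of parameter). -/
def ParallelLines {X : Type*} [MetricSpace X] (γ γ' : ℝ → X) : Prop :=
  ∃ (d : ℝ) (f : ℝ → ℝ → X), 0 ≤ d ∧
    (∀ s t u v : ℝ, u ∈ Set.Icc (0 : ℝ) d → v ∈ Set.Icc (0 : ℝ) d →
      dist (f s u) (f t v) = Real.sqrt ((s - t) ^ 2 + (u - v) ^ 2)) ∧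
    (∀ t, f t 0 = γ t) ∧
    (∃ c : ℝ, (∀ t, f t d = γ' (t + c)) ∨ (∀ t, f t d = γ' (c - t)))

open Set

theorem isometry_real_iff_sq_sub_eq {φ : ℝ → ℝ} :
    Isometry φ ↔ ∀ s t, (φ s - φ t) ^ 2 = (s - t) ^ 2 := by
  simp only [isometry_iff_dist_eq, Real.dist_eq, sq_eq_sq_iff_abs_eq_abs]

theorem Isometry.exists_eq_add_or_eq_sub {φ : ℝ → ℝ} (hφ : Isometry φ) :
    ∃ c, (∀ t, φ t = t + c) ∨ (∀ t, φ t = c - t) := by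
  have hsq := isometry_real_iff_sq_sub_eq.mp hφ
  set ε := φ 1 - φ 0
  have hε : ε * ε = 1 := by linear_combination hsq 1 0
  have hlin : ∀ t, φ t = φ 0 + ε * t := by
    intro t
    have hdot : ε * (φ t - φ 0) = t := by
      linear_combination (hsq t 0 - hsq t 1) / 2 + hε / 2
    linear_combination ε * hdot - (φ t - φ 0) * hε
  rcases mul_self_eq_one_iff.mp hε with h | h
  · exact ⟨φ 0, Or.inl fun t => by rw [hlin t, h]; ring⟩
  · exact ⟨φ 0, Or.inr fun t => by rw [hlin t, h]; ring⟩

theorem Isometry.surjective_real {φ : ℝ → ℝ} (hφ : Isometry φ) : Function.Surjective φ := by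
  obtain ⟨c, h | h⟩ := hφ.exists_eq_add_or_eq_sub
  · exact fun x => ⟨x - c, by rw [h]; ring⟩
  · exact fun x => ⟨c - x, by rw [h]; ring⟩

theorem eq_of_sq_sub_eq_sq_add_sq {τ u : ℝ → ℝ} {d : ℝ} (hu : ∀ s, u s ∈ Icc 0 d)
    (h : ∀ a b, (τ a - τ b) ^ 2 = (a - b) ^ 2 + (u a - u b) ^ 2) (s : ℝ) : u s = u 0 := by
  have hlin : ∀ c, u c = u 0 + (u 1 - u 0) * c := by
    intro c
    have hdot : (τ 1 - τ 0) * (τ c - τ 1) = (c - 1) + (u 1 - u 0) * (u c - u 1) := by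
      linear_combination (h c 0 - h 1 0 - h c 1) / 2
    -- Lagrange's identity: the equality case of Cauchy–Schwarz forces a zero determinant.
    have hdet : ((u c - u 1) - (u 1 - u 0) * (c - 1)) ^ 2 = 0 := by
      linear_combination (-((c - 1) ^ 2 + (u c - u 1) ^ 2)) * h 1 0
        - (τ 1 - τ 0) ^ 2 * h c 1
        + ((τ 1 - τ 0) * (τ c - τ 1) + (c - 1) + (u 1 - u 0) * (u c - u 1)) * hdot
    linear_combination pow_eq_zero_iff two_ne_zero |>.mp hdet
  have hslope : u 1 - u 0 = 0 := by
    by_contra hne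
    have hfar := hlin ((d + 1) / (u 1 - u 0))
    rw [mul_div_cancel₀ _ hne] at hfar
    linarith [(hu ((d + 1) / (u 1 - u 0))).2, (hu 0).1]
  rw [hlin s, hslope, zero_mul, add_zero]

section FlatStrip

variable {X : Type*} [MetricSpace X]

def IsFlatStrip (f : ℝ → ℝ → X) (d : ℝ) : Prop :=
  ∀ s t u v : ℝ, u ∈ Icc (0 : ℝ) d → v ∈ Icc (0 : ℝ) d →
    dist (f s u) (f t v) = Real.sqrt ((s - t) ^ 2 + (u - v) ^ 2)

theorem parallelLines_iff_exists_isFlatStrip {γ γ' : ℝ → X} :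
    ParallelLines γ γ' ↔ ∃ (d : ℝ) (f : ℝ → ℝ → X) (φ : ℝ → ℝ), 0 ≤ d ∧ IsFlatStrip f d ∧
      Isometry φ ∧ (∀ t, f t 0 = γ t) ∧ ∀ t, f t d = γ' (φ t) := by
  constructor
  · rintro ⟨d, f, hd, hf, hf0, c, hc | hc⟩
    · exact ⟨d, f, _, hd, hf, (IsometryEquiv.addRight c).isometry, hf0, hc⟩
    · exact ⟨d, f, _, hd, hf, (IsometryEquiv.subLeft c).isometry, hf0, hc⟩
  · rintro ⟨d, f, φ, hd, hf, hφ, hf0, hfd⟩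
    obtain ⟨c, hφc | hφc⟩ := hφ.exists_eq_add_or_eq_sub
    · exact ⟨d, f, hd, hf, hf0, c, Or.inl fun t => by rw [hfd, hφc]⟩
    · exact ⟨d, f, hd, hf, hf0, c, Or.inr fun t => by rw [hfd, hφc]⟩

namespace IsFlatStrip

variable {f : ℝ → ℝ → X} {d : ℝ}

theorem dist_vertical (hf : IsFlatStrip f d) (s : ℝ) {u v : ℝ} (hu : u ∈ Icc 0 d)
    (hv : v ∈ Icc 0 d) : dist (f s u) (f s v) = |u - v| := by
  rw [hf s s u v hu hv, sub_self, zero_pow two_ne_zero, zero_add, Real.sqrt_sq_eq_abs]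

theorem comp_left (hf : IsFlatStrip f d) {ψ : ℝ → ℝ} (hψ : Isometry ψ) :
    IsFlatStrip (fun s => f (ψ s)) d := fun s t u v hu hv => by
  rw [hf _ _ u v hu hv, isometry_real_iff_sq_sub_eq.mp hψ]

theorem comp_right (hf : IsFlatStrip f d) {a σ e : ℝ} (hσ : σ * σ = 1)
    (hmaps : ∀ w ∈ Icc 0 e, a + σ * w ∈ Icc 0 d) :
    IsFlatStrip (fun s w => f s (a + σ * w)) e := fun s t u v hu hv => by
  rw [hf _ _ _ _ (hmaps u hu) (hmaps v hv)]
  congr 2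
  linear_combination (u - v) ^ 2 * hσ

theorem parallelLines (hf : IsFlatStrip f d) {a b : ℝ} (ha : a ∈ Icc 0 d) (hb : b ∈ Icc 0 d) :
    ParallelLines (fun t => f t a) (fun t => f t b) := by
  rcases le_total a b with hab | hba
  · refine ⟨b - a, fun s w => f s (a + 1 * w), by linarith,
      hf.comp_right (one_mul 1) fun w hw => ⟨?_, ?_⟩, fun t => by simp, 0, Or.inl fun t => ?_⟩
    · linarith [ha.1, hw.1]
    · linarith [hb.2, hw.2]
    · simp
  · refine ⟨a - b, fun s w => f s (a + -1 * w), by linarith,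
      hf.comp_right (by norm_num) fun w hw => ⟨?_, ?_⟩, fun t => by simp, 0, Or.inl fun t => ?_⟩
    · linarith [hb.1, hw.2]
    · linarith [ha.2, hw.1]
    · simp

theorem exists_eq_comp_of_isGeodesicLine (hf : IsFlatStrip f d) {γ₀ : ℝ → X}
    (hγ₀ : IsGeodesicLine γ₀) (hmeet : ∀ s, ∃ u ∈ Icc 0 d, f s u ∈ range γ₀) :
    ∃ b ∈ Icc 0 d, ∃ ψ : ℝ → ℝ, Isometry ψ ∧ γ₀ = (fun s => f s b) ∘ ψ := by
  choose u hu τ hτ using hmeet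
  have hrel : ∀ a b, (τ a - τ b) ^ 2 = (a - b) ^ 2 + (u a - u b) ^ 2 := by
    intro a b
    have hdist := hγ₀ (τ a) (τ b)
    rw [hτ a, hτ b, hf a b _ _ (hu a) (hu b)] at hdist
    rw [← sq_abs, ← hdist, Real.sq_sqrt (by positivity)]
  have hu_const := eq_of_sq_sub_eq_sq_add_sq hu hrel
  have hτ_iso : Isometry τ := isometry_real_iff_sq_sub_eq.mpr fun a b => by
    rw [hrel, hu_const a, hu_const b, sub_self, zero_pow two_ne_zero, add_zero]
  refine ⟨u 0, hu 0, Function.surjInv hτ_iso.surjective_real,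
    hτ_iso.right_inv (Function.rightInverse_surjInv _), funext fun x => ?_⟩
  simp only [Function.comp_apply]
  rw [← hu_const, ← hτ, Function.surjInv_eq hτ_iso.surjective_real x]

end IsFlatStrip

namespace ParallelLines

variable {γ γ' : ℝ → X}

theorem comp_left (h : ParallelLines γ γ') {ψ : ℝ → ℝ} (hψ : Isometry ψ) :
    ParallelLines (γ ∘ ψ) γ' := by
  obtain ⟨d, f, φ, hd, hf, hφ, hf0, hfd⟩ := parallelLines_iff_exists_isFlatStrip.mp h
  exact parallelLines_iff_exists_isFlatStrip.mpr
    ⟨d, fun s => f (ψ s), φ ∘ ψ, hd, hf.comp_left hψ, hφ.comp hψ, fun t => hf0 (ψ t),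
      fun t => hfd (ψ t)⟩

theorem of_comp_right {ψ : ℝ → ℝ} (h : ParallelLines γ (γ' ∘ ψ)) (hψ : Isometry ψ) :
    ParallelLines γ γ' := by
  obtain ⟨d, f, φ, hd, hf, hφ, hf0, hfd⟩ := parallelLines_iff_exists_isFlatStrip.mp h
  exact parallelLines_iff_exists_isFlatStrip.mpr ⟨d, f, ψ ∘ φ, hd, hf, hψ.comp hφ, hf0, hfd⟩

end ParallelLines

def SegmentsMeet (γ γ' : ℝ → X) (S : Set X) : Prop :=
  ∀ s t : ℝ, ∀ σ : ℝ → X,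
    σ 0 = γ s → σ (dist (γ s) (γ' t)) = γ' t →
    (∀ u v : ℝ, u ∈ Icc 0 (dist (γ s) (γ' t)) → v ∈ Icc 0 (dist (γ s) (γ' t)) →
      dist (σ u) (σ v) = |u - v|) →
    ∃ u ∈ Icc 0 (dist (γ s) (γ' t)), σ u ∈ S

theorem SegmentsMeet.exists_vertical_mem {γ γ' : ℝ → X} {S : Set X} (hS : SegmentsMeet γ γ' S)
    {f : ℝ → ℝ → X} {d : ℝ} {φ : ℝ → ℝ} (hd : 0 ≤ d) (hf : IsFlatStrip f d)
    (hf0 : ∀ t, f t 0 = γ t) (hfd : ∀ t, f t d = γ' (φ t)) (s : ℝ) :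
    ∃ u ∈ Icc 0 d, f s u ∈ S := by
  have hlen : dist (γ s) (γ' (φ s)) = d := by
    rw [← hf0, ← hfd, hf.dist_vertical s ⟨le_rfl, hd⟩ ⟨hd, le_rfl⟩, zero_sub, abs_neg,
      abs_of_nonneg hd]
  have hsegment := hS s (φ s) (f s) (hf0 s)
  rw [hlen] at hsegment
  exact hsegment (hfd s) fun u v hu hv => hf.dist_vertical s hu hv

end FlatStrip

theorem stmt13_general {X : Type*} [MetricSpace X]
    (γ γ' γ₀ : ℝ → X)
    (hγ₀ : IsGeodesicLine γ₀)
    (hpar : ParallelLines γ γ')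
    (hbetween : ∀ s t : ℝ, ∀ σ : ℝ → X,
      σ 0 = γ s → σ (dist (γ s) (γ' t)) = γ' t →
      (∀ u v : ℝ, u ∈ Set.Icc 0 (dist (γ s) (γ' t)) → v ∈ Set.Icc 0 (dist (γ s) (γ' t)) →
        dist (σ u) (σ v) = |u - v|) →
      ∃ u ∈ Set.Icc 0 (dist (γ s) (γ' t)), σ u ∈ Set.range γ₀) :
    ParallelLines γ₀ γ ∧ ParallelLines γ₀ γ' := by
  obtain ⟨d, f, φ, hd, hf, hφ, hf0, hfd⟩ := parallelLines_iff_exists_isFlatStrip.mp hpar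
  have hmeet := SegmentsMeet.exists_vertical_mem hbetween hd hf hf0 hfd
  obtain ⟨b, hb, ψ, hψ, rfl⟩ := hf.exists_eq_comp_of_isGeodesicLine hγ₀ hmeet
  have hγ : (fun t => f t 0) = γ := funext hf0
  have hγ' : (fun t => f t d) = γ' ∘ φ := funext hfd
  constructor
  · exact hγ ▸ (hf.parallelLines hb ⟨le_rfl, hd⟩).comp_left hψ
  · exact ((hγ' ▸ hf.parallelLines hb ⟨hd, le_rfl⟩).comp_left hψ).of_comp_right hφ

/-- The Joint Line Lemma.  In the CAT(0) space (e.g. the joint block `Γ⁴ × ℝ`), let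
`γ` and `γ'` be parallel geodesic (joint) lines, and let `γ₀` be a joint line lying
*between* them: every geodesic segment from a point of `γ` to a point of `γ'` meets
`γ₀`.  Then `γ₀` is parallel to both `γ` and `γ'`. -/
theorem stmt13 {X : Type*} [MetricSpace X]
    (γ γ' γ₀ : ℝ → X)
    (hγ : IsGeodesicLine γ) (hγ' : IsGeodesicLine γ') (hγ₀ : IsGeodesicLine γ₀)
    (hpar : ParallelLines γ γ')
    (hbetween : ∀ s t : ℝ, ∀ σ : ℝ → X,
      σ 0 = γ s → σ (dist (γ s) (γ' t)) = γ' t →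
      (∀ u v : ℝ, u ∈ Set.Icc 0 (dist (γ s) (γ' t)) → v ∈ Set.Icc 0 (dist (γ s) (γ' t)) →
        dist (σ u) (σ v) = |u - v|) →
      ∃ u ∈ Set.Icc 0 (dist (γ s) (γ' t)), σ u ∈ Set.range γ₀) :
    ParallelLines γ₀ γ ∧ ParallelLines γ₀ γ' :=
  stmt13_general γ γ' γ₀ hγ₀ hpar hbetween
end

section
/- Let N̂ be a simple graph in which every 4-cycle would require two joint blocks to share two common natural-block neighbors, which is impossible (|C(B_J) ∩ C(B'_J)| ≤ 1 for distinct joint blocks B_J, B'_J), and in which every cycle of length at least 6 without backtracking leads to a contradiction via the chain decomposition of itineraries. Then N̂ is a tree. -/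
/-!
A 2-colouring forces every closed walk to have even length, so a cycle of length less than six
is a 4-cycle `v a b d`. Opposite corners of a 4-cycle have the same colour and two distinct
common neighbours, and one of the two opposite pairs consists of joint blocks.
-/

namespace SimpleGraph

variable {V : Type*} {G : SimpleGraph V}

lemma Walk.IsCycle.exists_adj_of_length_eq_four {v : V} {c : G.Walk v v} (hc : c.IsCycle)
    (h4 : c.length = 4) :
    ∃ a b d, G.Adj v a ∧ G.Adj a b ∧ G.Adj b d ∧ G.Adj d v ∧ v ≠ b ∧ a ≠ d := by
  obtain _ | ⟨h₁, _ | ⟨h₂, _ | ⟨h₃, _ | ⟨h₄, _ | ⟨_, _⟩⟩⟩⟩⟩ := c <;>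
    simp only [Walk.length_cons, Walk.length_nil] at h4 <;> try omega
  have hnodup := hc.support_nodup
  simp only [Walk.support_cons, Walk.support_nil, List.tail_cons, List.nodup_cons, List.mem_cons,
    List.not_mem_nil, or_false, not_or, not_false_eq_true, List.nodup_nil, and_self,
    and_true] at hnodup
  exact ⟨_, _, _, h₁, h₂, h₃, h₄, by tauto, by tauto⟩

lemma Coloring.eq_of_adj_of_adj (C : G.Coloring Bool) {u v w : V} (huv : G.Adj u v)
    (hvw : G.Adj v w) : C u = C w := by
  rw [Bool.eq_not_iff.mpr (C.valid huv), Bool.eq_not_iff.mpr (C.valid hvw.symm)]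

lemma Walk.IsCycle.length_ne_four_of_subsingleton_commonNeighbors (C : G.Coloring Bool)
    (hcommon : ∀ u v : V, C u = true → C v = true → u ≠ v →
      {w : V | G.Adj u w ∧ G.Adj v w}.Subsingleton)
    {v : V} {c : G.Walk v v} (hc : c.IsCycle) : c.length ≠ 4 := by
  intro h4
  obtain ⟨a, b, d, hva, hab, hbd, hdv, hvb, had⟩ := hc.exists_adj_of_length_eq_four h4
  cases hv : C v
  · have ha : C a = true := by simpa [hv] using (C.valid hva).symm
    have hd : C d = true := by rw [← ha, C.eq_of_adj_of_adj hdv hva]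
    exact hvb (hcommon a d ha hd had ⟨hva.symm, hdv⟩ ⟨hab, hbd.symm⟩)
  · have hb : C b = true := by rw [← hv, C.eq_of_adj_of_adj hva hab]
    exact had (hcommon v b hv hb hvb ⟨hva, hab.symm⟩ ⟨hdv.symm, hbd⟩)

end SimpleGraph

/-- The "new nerve" `N̂` is a tree.  Let `N̂` be a connected simple graph whose
vertices are two kinds of blocks (joint and natural, recorded by `side`), with edges
only between blocks of different kinds (bipartite).  Suppose that two distinct joint
blocks have at most one common natural neighbor (`|C(B_J) ∩ C(B'_J)| ≤ 1`, ruling out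
4-cycles) and that there are no cycles of length at least 6 (the chain decomposition
of itineraries rules these out).  Then `N̂` is a tree. -/
theorem stmt14 {V : Type*} (G : SimpleGraph V) (hconn : G.Connected)
    (side : V → Bool)
    (hbip : ∀ u v : V, G.Adj u v → side u ≠ side v)
    (hcommon : ∀ u v : V, side u = true → side v = true → u ≠ v →
      {w : V | G.Adj u w ∧ G.Adj v w}.Subsingleton)
    (hlong : ∀ (v : V) (c : G.Walk v v), c.IsCycle → c.length < 6) :
    G.IsTree := by
  let C : G.Coloring Bool := SimpleGraph.Coloring.mk side (hbip _ _)
  refine ⟨hconn, fun v c hc => ?_⟩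
  obtain ⟨k, hk⟩ : Even c.length := (C.even_length_iff_congr c).mpr Iff.rfl
  have h4 : c.length ≠ 4 := hc.length_ne_four_of_subsingleton_commonNeighbors C hcommon
  have h3 := hc.three_le_length
  have h6 := hlong v c hc
  omega
end
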